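/- arXiv:2103.09204 — 4 statements merged into one kernel-verified Lean document; each statement's English description precedes it below -/
import Mathlib

section
/- For every θ > 0 and every pair of real numbers 0 < a < b, there exists a unique pair (c0, c1) with c0 > c1 > 0 such that J(s_a; c0, c1) = a and J(s_b; c0, c1) = b. -/
/-!
`s_a` and `s_b` are the roots of `θs² − (1 − θ)s = c0 / c1`. Writing `c0 / c1 = θA² + (1 + θ)A + 1`,
the constraint `c0 > c1 > 0` becomes `A > 0`, the roots become `s_a = -(A + 1)` and
`s_b = A + 1/θ`, and `J(s_a) = c1 · jLow θ A`, `J(s_b) = c1 · jHigh θ A`. The ratio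
`jLow θ A / jHigh θ A` is a product of factors `y / (y + c)` with `c > 0` and a positive power of
such factors, hence increases strictly from `0` (at `A = 0`) to `1` (as `A → ∞`). So `a / b`
determines `A`, and `b` then determines `c1`.
-/

open Real Filter Set Topology

/-- The map `J(s; c0, c1) = (c1*s + c0) * ((s+1)/s)^(1/θ)` for real `s`,
using the real power of the positive quantity `(s+1)/s`. -/
noncomputable def Jmap (θ c0 c1 s : ℝ) : ℝ :=
  (c1 * s + c0) * ((s + 1) / s) ^ (1 / θ)

/-- `s_a = (1−θ)/(2θ) − (1/(2θ))·√(4θ·r + (1−θ)²)` where `r = c0/c1`. -/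
noncomputable def sA (θ r : ℝ) : ℝ :=
  (1 - θ) / (2 * θ) - 1 / (2 * θ) * Real.sqrt (4 * θ * r + (1 - θ) ^ 2)

/-- `s_b = (1−θ)/(2θ) + (1/(2θ))·√(4θ·r + (1−θ)²)` where `r = c0/c1`. -/
noncomputable def sB (θ r : ℝ) : ℝ :=
  (1 - θ) / (2 * θ) + 1 / (2 * θ) * Real.sqrt (4 * θ * r + (1 - θ) ^ 2)

lemma div_add_lt_div_add {c x y : ℝ} (hc : 0 < c) (hx : 0 ≤ x) (hxy : x < y) :
    x / (x + c) < y / (y + c) := by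
  rw [div_lt_div_iff₀ (by positivity) (by linarith)]
  nlinarith

lemma tendsto_div_add_atTop (c : ℝ) : Tendsto (fun y : ℝ => y / (y + c)) atTop (𝓝 1) := by
  have h : Tendsto (fun y : ℝ => 1 - c / (y + c)) atTop (𝓝 (1 - 0)) :=
    tendsto_const_nhds.sub <| tendsto_const_nhds.div_atTop <|
      tendsto_atTop_add_const_right _ c tendsto_id
  rw [sub_zero] at h
  refine h.congr' ?_
  filter_upwards [eventually_gt_atTop (-c)] with y hy
  have : y + c ≠ 0 := by linarith
  field_simp
  ring

noncomputable def jRatio (t A : ℝ) : ℝ :=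
  A / (A + t) * ((A + 1) / (A + 1 + t)) * (A / (A + 1) * ((A + t) / (A + t + 1))) ^ t

lemma jRatio_zero (t : ℝ) : jRatio t 0 = 0 := by
  simp [jRatio]

lemma strictMonoOn_jRatio {t : ℝ} (ht : 0 < t) : StrictMonoOn (jRatio t) (Ici 0) := by
  intro x (hx : 0 ≤ x) y _ hxy
  have h1 := div_add_lt_div_add ht hx hxy
  have h2 := div_add_lt_div_add ht (by linarith : 0 ≤ x + 1) (by linarith : x + 1 < y + 1)
  have h3 := div_add_lt_div_add one_pos hx hxy
  have h4 := div_add_lt_div_add one_pos (by linarith : 0 ≤ x + t) (by linarith : x + t < y + t)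
  unfold jRatio
  refine mul_lt_mul'' (mul_lt_mul'' h1 h2 (by positivity) (by positivity))
    (Real.rpow_lt_rpow (by positivity) (mul_lt_mul'' h3 h4 (by positivity) (by positivity)) ht)
    (by positivity) (by positivity)

lemma continuousOn_jRatio {t : ℝ} (ht : 0 < t) : ContinuousOn (jRatio t) (Ici 0) := by
  unfold jRatio
  have hdiv (c : ℝ) (hc : 0 < c) (d : ℝ) (hd : 0 ≤ d) :
      ContinuousOn (fun A : ℝ => (A + d) / (A + d + c)) (Ici 0) :=
    ContinuousOn.div (by fun_prop) (by fun_prop) fun A (hA : 0 ≤ A) => by positivity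
  exact ((hdiv t ht 0 le_rfl).mul (hdiv t ht 1 zero_le_one)).mul
    (((hdiv 1 one_pos 0 le_rfl).mul (hdiv 1 one_pos t ht.le)).rpow_const fun _ _ => Or.inr ht.le)
    |>.congr fun A _ => by simp

lemma tendsto_jRatio_atTop {t : ℝ} (ht : 0 < t) : Tendsto (jRatio t) atTop (𝓝 1) := by
  have shift (c d : ℝ) : Tendsto (fun A : ℝ => (A + d) / (A + d + c)) atTop (𝓝 1) :=
    (tendsto_div_add_atTop c).comp (tendsto_atTop_add_const_right _ d tendsto_id)
  have h := ((shift t 0).mul (shift t 1)).mul (((shift 1 0).mul (shift 1 t)).rpow_const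
    (Or.inr ht.le))
  unfold jRatio
  simpa using h

lemma exists_pos_jRatio_eq {t k : ℝ} (ht : 0 < t) (hk0 : 0 < k) (hk1 : k < 1) :
    ∃ A, 0 < A ∧ jRatio t A = k := by
  obtain ⟨B, hB, hB0⟩ := ((tendsto_jRatio_atTop ht).eventually (lt_mem_nhds hk1)).and
    (eventually_ge_atTop 0) |>.exists
  obtain ⟨A, hA, hAk⟩ := intermediate_value_Icc hB0
    ((continuousOn_jRatio ht).mono fun x hx => hx.1)
    ⟨(jRatio_zero t).le.trans hk0.le, hB.le⟩
  refine ⟨A, hA.1.lt_of_ne ?_, hAk⟩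
  rintro rfl
  rw [jRatio_zero t] at hAk
  exact hk0.ne hAk

noncomputable def quadR (θ A : ℝ) : ℝ := θ * A ^ 2 + (1 + θ) * A + 1

lemma one_lt_quadR {θ A : ℝ} (hθ : 0 < θ) (hA : 0 < A) : 1 < quadR θ A := by
  unfold quadR; nlinarith [mul_nonneg hθ.le (sq_nonneg A), mul_pos hθ hA]

lemma sqrt_discr_quadR {θ A : ℝ} (hθ : 0 < θ) (hA : 0 ≤ A) :
    √(4 * θ * quadR θ A + (1 - θ) ^ 2) = 2 * θ * A + (1 + θ) := by
  rw [show 4 * θ * quadR θ A + (1 - θ) ^ 2 = (2 * θ * A + (1 + θ)) ^ 2 by unfold quadR; ring]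
  exact Real.sqrt_sq (by positivity)

lemma sA_quadR {θ A : ℝ} (hθ : 0 < θ) (hA : 0 ≤ A) : sA θ (quadR θ A) = -(A + 1) := by
  rw [sA, sqrt_discr_quadR hθ hA]
  field_simp
  ring

lemma sB_quadR {θ A : ℝ} (hθ : 0 < θ) (hA : 0 ≤ A) : sB θ (quadR θ A) = A + 1 / θ := by
  rw [sB, sqrt_discr_quadR hθ hA]
  field_simp
  ring

lemma exists_pos_quadR_eq {θ r : ℝ} (hθ : 0 < θ) (hr : 1 < r) :
    ∃ A, 0 < A ∧ quadR θ A = r := by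
  set D := 4 * θ * r + (1 - θ) ^ 2
  have hsqrt : 1 + θ < √D := by
    rw [Real.lt_sqrt (by positivity)]
    nlinarith
  refine ⟨(√D - (1 + θ)) / (2 * θ), by apply div_pos <;> linarith, ?_⟩
  have hsq : √D ^ 2 = D := Real.sq_sqrt (by positivity)
  unfold quadR
  field_simp
  linear_combination hsq

noncomputable def jLow (θ A : ℝ) : ℝ := θ * (A * (A + 1)) * (A / (A + 1)) ^ (1 / θ)

noncomputable def jHigh (θ A : ℝ) : ℝ :=
  θ * ((A + 1 / θ) * (A + 1 / θ + 1)) * ((A + 1 / θ + 1) / (A + 1 / θ)) ^ (1 / θ)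

lemma jHigh_pos {θ A : ℝ} (hθ : 0 < θ) (hA : 0 ≤ A) : 0 < jHigh θ A := by
  unfold jHigh; positivity

lemma Jmap_sA_quadR {θ c1 A : ℝ} (hθ : 0 < θ) (hc1 : c1 ≠ 0) (hA : 0 ≤ A) :
    Jmap θ (c1 * quadR θ A) c1 (sA θ (c1 * quadR θ A / c1)) = c1 * jLow θ A := by
  rw [mul_div_cancel_left₀ _ hc1, sA_quadR hθ hA, Jmap, jLow,
    show -(A + 1) + 1 = -A by ring, neg_div_neg_eq]
  unfold quadR
  ring

lemma Jmap_sB_quadR {θ c1 A : ℝ} (hθ : 0 < θ) (hc1 : c1 ≠ 0) (hA : 0 ≤ A) :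
    Jmap θ (c1 * quadR θ A) c1 (sB θ (c1 * quadR θ A / c1)) = c1 * jHigh θ A := by
  rw [mul_div_cancel_left₀ _ hc1, sB_quadR hθ hA, Jmap, jHigh]
  unfold quadR
  field_simp
  ring

lemma jLow_div_jHigh {θ A : ℝ} (hθ : 0 < θ) (hA : 0 < A) :
    jLow θ A / jHigh θ A = jRatio (1 / θ) A := by
  have h1 : 0 < A + 1 / θ := by positivity
  unfold jLow jHigh jRatio
  rw [Real.mul_rpow (by positivity) (by positivity), Real.div_rpow hA.le (by positivity),
    Real.div_rpow (by positivity) h1.le, Real.div_rpow h1.le (by positivity)]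
  field_simp
  ring

/-- For every `θ > 0` and `0 < a < b` there is a unique pair `(c0, c1)` with
`c0 > c1 > 0` such that `J(s_a; c0, c1) = a` and `J(s_b; c0, c1) = b`. -/
theorem stmt0 (θ a b : ℝ) (hθ : 0 < θ) (ha : 0 < a) (hab : a < b) :
    ∃! p : ℝ × ℝ, (0 < p.2 ∧ p.2 < p.1) ∧
      Jmap θ p.1 p.2 (sA θ (p.1 / p.2)) = a ∧
      Jmap θ p.1 p.2 (sB θ (p.1 / p.2)) = b := by
  have hb : 0 < b := ha.trans hab
  obtain ⟨A, hA, hAab⟩ :=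
    exists_pos_jRatio_eq (one_div_pos.2 hθ) (div_pos ha hb) ((div_lt_one hb).2 hab)
  have hHigh := jHigh_pos hθ hA.le
  have hc1 : 0 < b / jHigh θ A := div_pos hb hHigh
  refine ⟨(b / jHigh θ A * quadR θ A, b / jHigh θ A), ⟨⟨hc1, ?_⟩, ?_, ?_⟩, ?_⟩
  · exact lt_mul_of_one_lt_right hc1 (one_lt_quadR hθ hA)
  · rw [Jmap_sA_quadR hθ hc1.ne' hA.le, div_mul_comm, jLow_div_jHigh hθ hA, hAab,
      div_mul_cancel₀ _ hb.ne']
  · rw [Jmap_sB_quadR hθ hc1.ne' hA.le, div_mul_cancel₀ _ hHigh.ne']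
  rintro ⟨c0, c1⟩ ⟨⟨hc1' : 0 < c1, hc10 : c1 < c0⟩, hJa, hJb⟩
  obtain ⟨A', hA', hA'r⟩ := exists_pos_quadR_eq hθ ((one_lt_div hc1').2 hc10)
  obtain rfl : c0 = c1 * quadR θ A' := by rw [hA'r, mul_div_cancel₀ _ hc1'.ne']
  rw [Jmap_sA_quadR hθ hc1'.ne' hA'.le] at hJa
  rw [Jmap_sB_quadR hθ hc1'.ne' hA'.le] at hJb
  obtain rfl : A' = A := (strictMonoOn_jRatio (one_div_pos.2 hθ)).injOn hA'.le hA.le <| by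
    rw [← jLow_div_jHigh hθ hA', hAab, ← hJa, ← hJb, mul_div_mul_left _ _ hc1'.ne']
  obtain rfl : c1 = b / jHigh θ A' := eq_div_of_mul_eq hHigh.ne' hJb
  rfl
end

section
/- The function f : (1, ∞) → ℝ defined by f(x) = J(s_b(x); x, 1) / J(s_a(x); x, 1) is differentiable with f′(x) < 0 for all x > 1 (in particular f is strictly decreasing), f(x) → +∞ as x → 1⁺, and f(x) → 1 as x → +∞. -/
/-- `f(x) = J(s_b(x); x, 1) / J(s_a(x); x, 1)` for `x > 1`. -/
noncomputable def fratio (θ x : ℝ) : ℝ :=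
  Jmap θ x 1 (sB θ x) / Jmap θ x 1 (sA θ x)

/-!
`s_a(x)` and `s_b(x)` are the two roots of `θ s² + (θ - 1) s - x = 0`, i.e. the two critical points
of `J(·; x, 1)`. By the envelope principle `d/dx J(s(x); x, 1) = ∂J/∂c₀ = ((s + 1)/s)^{1/θ}` along
either root, so the numerator of `f'` collapses to
`((s_a+1)/s_a)^{1/θ} ((s_b+1)/s_b)^{1/θ} (s_a - s_b) < 0`.
At `x = 1` we have `s_a = -1`, so `J(s_a; x, 1) → 0⁺` while the numerator stays positive.
As `x → ∞`, Vieta's `x = -θ s_a s_b` turns `f` into a continuous function of `1/s_a` and `1/s_b`,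
both of which tend to `0`.
-/

open Filter Real Topology

/-- The equation `∂J/∂s (s; c₀, 1) = 0`, since
`∂J/∂s = ((s+1)/s)^{1/θ} (1 - (s + c₀) / (θ s (s+1)))`. -/
def IsJCritical (θ c0 s : ℝ) : Prop :=
  s + c0 = θ * (s * (s + 1))

section

variable {θ x : ℝ}

lemma Jmap_one (θ c0 s : ℝ) : Jmap θ c0 1 s = (s + c0) * ((s + 1) / s) ^ (1 / θ) := by
  rw [Jmap, one_mul]

lemma add_one_div_pos {s : ℝ} (hs : 0 < s * (s + 1)) : 0 < (s + 1) / s :=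
  div_pos_iff.2 (mul_pos_iff.1 (mul_comm s (s + 1) ▸ hs))

lemma Jmap_pos_of_isJCritical (hθ : 0 < θ) {c0 s : ℝ} (hs : 0 < s * (s + 1))
    (hc : IsJCritical θ c0 s) : 0 < Jmap θ c0 1 s := by
  rw [Jmap_one]
  exact mul_pos (hc ▸ mul_pos hθ hs) (rpow_pos_of_pos (add_one_div_pos hs) _)

lemma isJCritical_of_vieta (hθ : θ ≠ 0) {s t : ℝ} (hsum : s + t = (1 - θ) / θ)
    (hprod : s * t = -x / θ) : IsJCritical θ x s := by
  rw [eq_div_iff hθ] at hsum hprod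
  unfold IsJCritical
  linear_combination hprod - s * hsum

lemma sA_add_sB (hθ : θ ≠ 0) : sA θ x + sB θ x = (1 - θ) / θ := by
  unfold sA sB
  field_simp
  ring

lemma sA_mul_sB (hθ : θ ≠ 0) (hD : 0 ≤ 4 * θ * x + (1 - θ) ^ 2) :
    sA θ x * sB θ x = -x / θ := by
  unfold sA sB
  have hsq := sq_sqrt hD
  set r := √(4 * θ * x + (1 - θ) ^ 2)
  field_simp
  linear_combination -hsq

lemma disc_nonneg (hθ : 0 < θ) (hx : 0 ≤ x) : 0 ≤ 4 * θ * x + (1 - θ) ^ 2 := by positivity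

lemma isJCritical_sA (hθ : 0 < θ) (hx : 0 ≤ x) : IsJCritical θ x (sA θ x) :=
  isJCritical_of_vieta hθ.ne' (sA_add_sB hθ.ne') (sA_mul_sB hθ.ne' (disc_nonneg hθ hx))

lemma isJCritical_sB (hθ : 0 < θ) (hx : 0 ≤ x) : IsJCritical θ x (sB θ x) :=
  isJCritical_of_vieta hθ.ne' (by rw [add_comm, sA_add_sB hθ.ne'])
    (by rw [mul_comm, sA_mul_sB hθ.ne' (disc_nonneg hθ hx)])

lemma one_add_lt_sqrt_disc (hθ : 0 < θ) (hx : 1 < x) :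
    1 + θ < √(4 * θ * x + (1 - θ) ^ 2) := by
  rw [lt_sqrt (by positivity)]
  nlinarith

lemma sA_lt_neg_one (hθ : 0 < θ) (hx : 1 < x) : sA θ x < -1 := by
  have h := one_add_lt_sqrt_disc hθ hx
  have h2 : sA θ x = (1 - θ - √(4 * θ * x + (1 - θ) ^ 2)) / (2 * θ) := by unfold sA; ring
  rw [h2, div_lt_iff₀ (by positivity)]
  linarith

lemma sB_pos (hθ : 0 < θ) (hx : 1 < x) : 0 < sB θ x := by
  have h := one_add_lt_sqrt_disc hθ hx
  have h2 : sB θ x = (1 - θ + √(4 * θ * x + (1 - θ) ^ 2)) / (2 * θ) := by unfold sB; ring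
  rw [h2]
  exact div_pos (by linarith) (by positivity)

lemma sA_one (hθ : 0 < θ) : sA θ 1 = -1 := by
  rw [sA, show 4 * θ * 1 + (1 - θ) ^ 2 = (1 + θ) ^ 2 by ring, sqrt_sq (by positivity)]
  field_simp
  ring

lemma sB_one (hθ : 0 < θ) : sB θ 1 = 1 / θ := by
  rw [sB, show 4 * θ * 1 + (1 - θ) ^ 2 = (1 + θ) ^ 2 by ring, sqrt_sq (by positivity)]
  field_simp
  ring

lemma Jmap_sA_pos (hθ : 0 < θ) (hx : 1 < x) : 0 < Jmap θ x 1 (sA θ x) := by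
  have h := sA_lt_neg_one hθ hx
  exact Jmap_pos_of_isJCritical hθ (by nlinarith) (isJCritical_sA hθ (by positivity))

lemma differentiableAt_sA (hD : 4 * θ * x + (1 - θ) ^ 2 ≠ 0) : DifferentiableAt ℝ (sA θ) x :=
  ((((differentiableAt_id.const_mul _).add_const _).sqrt hD).const_mul _).const_sub _

lemma differentiableAt_sB (hD : 4 * θ * x + (1 - θ) ^ 2 ≠ 0) : DifferentiableAt ℝ (sB θ) x :=
  ((((differentiableAt_id.const_mul _).add_const _).sqrt hD).const_mul _).const_add _

lemma continuous_sA : Continuous (sA θ) := by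
  unfold sA; fun_prop

lemma continuous_sB : Continuous (sB θ) := by
  unfold sB; fun_prop

lemma hasDerivAt_Jmap_of_isJCritical (hθ : θ ≠ 0) {s : ℝ → ℝ} {s' : ℝ} (hs : HasDerivAt s s' x)
    (h0 : s x ≠ 0) (h1 : s x + 1 ≠ 0) (hc : IsJCritical θ x (s x)) :
    HasDerivAt (fun y => Jmap θ y 1 (s y)) (((s x + 1) / s x) ^ (1 / θ)) x := by
  have hr : (s x + 1) / s x ≠ 0 := div_ne_zero h1 h0
  have hJ := (hs.add (hasDerivAt_id x)).mul
    (((hs.add_const 1).div hs h0).rpow_const (p := 1 / θ) (Or.inl hr))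
  simp only [Jmap_one]
  refine hJ.congr_deriv ?_
  simp only [Pi.add_apply, Pi.div_apply, id]
  rw [rpow_sub_one hr, hc]
  field_simp
  ring

lemma hasDerivAt_fratio (hθ : 0 < θ) (hx : 1 < x) :
    HasDerivAt (fratio θ)
      (((sB θ x + 1) / sB θ x) ^ (1 / θ) * ((sA θ x + 1) / sA θ x) ^ (1 / θ) *
        (sA θ x - sB θ x) / Jmap θ x 1 (sA θ x) ^ 2) x := by
  have hA := sA_lt_neg_one hθ hx
  have hB := sB_pos hθ hx
  have hD : 4 * θ * x + (1 - θ) ^ 2 ≠ 0 := by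
    have : 0 < x := by linarith
    positivity
  have hJA := hasDerivAt_Jmap_of_isJCritical hθ.ne' (differentiableAt_sA hD).hasDerivAt
    (by linarith) (by linarith) (isJCritical_sA hθ (by positivity))
  have hJB := hasDerivAt_Jmap_of_isJCritical hθ.ne' (differentiableAt_sB hD).hasDerivAt
    (by linarith) (by linarith) (isJCritical_sB hθ (by positivity))
  refine (hJB.div hJA (Jmap_sA_pos hθ hx).ne').congr_deriv ?_
  rw [Jmap_one, Jmap_one]
  ring

lemma deriv_fratio_neg (hθ : 0 < θ) (hx : 1 < x) : deriv (fratio θ) x < 0 := by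
  have hA := sA_lt_neg_one hθ hx
  have hB := sB_pos hθ hx
  have hrA := rpow_pos_of_pos (add_one_div_pos (s := sA θ x) (by nlinarith)) (1 / θ)
  have hrB := rpow_pos_of_pos (add_one_div_pos (s := sB θ x) (by positivity)) (1 / θ)
  rw [(hasDerivAt_fratio hθ hx).deriv]
  exact div_neg_of_neg_of_pos (mul_neg_of_pos_of_neg (mul_pos hrB hrA) (by linarith))
    (pow_pos (Jmap_sA_pos hθ hx) 2)

lemma continuousAt_Jmap_comp (hθ : 0 < θ) {s : ℝ → ℝ} (hs : ContinuousAt s x) (h0 : s x ≠ 0) :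
    ContinuousAt (fun y => Jmap θ y 1 (s y)) x := by
  simp only [Jmap_one]
  exact (hs.add continuousAt_id).mul
    (((hs.add continuousAt_const).div hs h0).rpow_const (Or.inr (by positivity)))

lemma tendsto_fratio_nhdsGT_one (hθ : 0 < θ) : Tendsto (fratio θ) (𝓝[>] 1) atTop := by
  have hB : 0 < Jmap θ 1 1 (sB θ 1) := by
    rw [sB_one hθ, Jmap_one]
    positivity
  have hnum : Tendsto (fun y => Jmap θ y 1 (sB θ y)) (𝓝[>] 1) (𝓝 (Jmap θ 1 1 (sB θ 1))) :=
    (continuousAt_Jmap_comp hθ continuous_sB.continuousAt (by rw [sB_one hθ]; positivity)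
      ).tendsto.mono_left nhdsWithin_le_nhds
  have hden : Tendsto (fun y => Jmap θ y 1 (sA θ y)) (𝓝[>] 1) (𝓝[>] 0) := by
    refine tendsto_nhdsWithin_of_tendsto_nhds_of_eventually_within _ ?_
      (eventually_nhdsWithin_of_forall fun y hy => Jmap_sA_pos hθ hy)
    have h := (continuousAt_Jmap_comp hθ continuous_sA.continuousAt
      (by rw [sA_one hθ]; norm_num)).tendsto
    rw [sA_one hθ, Jmap_one, neg_add_cancel, zero_div, zero_rpow (by positivity), mul_zero] at h
    exact h.mono_left nhdsWithin_le_nhds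
  exact (hnum.pos_mul_atTop hB hden.inv_tendsto_nhdsGT_zero).congr
    fun y => (div_eq_mul_inv _ _).symm

lemma tendsto_sB_atTop (hθ : 0 < θ) : Tendsto (sB θ) atTop atTop :=
  tendsto_atTop_add_const_left _ _ <| (tendsto_sqrt_atTop.comp <|
    tendsto_atTop_add_const_right _ _ <| tendsto_id.const_mul_atTop (by positivity)
    ).const_mul_atTop (by positivity)

lemma tendsto_sA_atBot (hθ : 0 < θ) : Tendsto (sA θ) atTop atBot := by
  refine (tendsto_atBot_add_const_left _ ((1 - θ) / θ)
    (tendsto_neg_atTop_atBot.comp (tendsto_sB_atTop hθ))).congr fun y => ?_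
  rw [← sA_add_sB (x := y) hθ.ne']
  simp

lemma Jmap_eq_of_mul_eq (hθ : θ ≠ 0) {a b : ℝ} (ha : a ≠ 0) (hb : b ≠ 0) (hab : a * b = -x / θ) :
    Jmap θ x 1 b = a * b * (a⁻¹ - θ) * (1 + b⁻¹) ^ (1 / θ) := by
  rw [Jmap_one, add_div, div_self hb, one_div]
  congr 1
  rw [eq_div_iff hθ] at hab
  field_simp
  linear_combination hab

lemma fratio_eq (hθ : 0 < θ) (hx : 1 < x) :
    fratio θ x = ((sA θ x)⁻¹ - θ) / ((sB θ x)⁻¹ - θ) *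
      ((1 + (sB θ x)⁻¹) ^ (1 / θ) / (1 + (sA θ x)⁻¹) ^ (1 / θ)) := by
  have hA : sA θ x ≠ 0 := by linarith [sA_lt_neg_one hθ hx]
  have hB : sB θ x ≠ 0 := (sB_pos hθ hx).ne'
  have hAB := sA_mul_sB (x := x) hθ.ne' (disc_nonneg hθ (by positivity))
  rw [fratio, Jmap_eq_of_mul_eq hθ.ne' hA hB hAB,
    Jmap_eq_of_mul_eq hθ.ne' hB hA (by rw [mul_comm, hAB]), mul_comm (sB θ x)]
  simp only [mul_assoc]
  rw [mul_div_mul_left _ _ hA, mul_div_mul_left _ _ hB, mul_div_mul_comm]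

lemma tendsto_fratio_atTop (hθ : 0 < θ) : Tendsto (fratio θ) atTop (𝓝 1) := by
  have hpow : ∀ {w : ℝ → ℝ}, Tendsto w atTop (𝓝 0) →
      Tendsto (fun y => (1 + w y) ^ (1 / θ)) atTop (𝓝 1) := fun hw => by
    simpa [Function.comp_def] using ((continuousAt_const.add continuousAt_id).rpow_const
      (p := 1 / θ) (Or.inl (by norm_num : (1 : ℝ) + 0 ≠ 0))).tendsto.comp hw
  have hA := (tendsto_sA_atBot hθ).inv_tendsto_atBot
  have hB := (tendsto_sB_atTop hθ).inv_tendsto_atTop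
  have h := ((hA.sub_const θ).div (hB.sub_const θ) (by simpa using hθ.ne')).mul
    ((hpow hB).div (hpow hA) one_ne_zero)
  rw [div_self (by simpa using hθ.ne'), div_one, mul_one] at h
  exact h.congr' ((eventually_gt_atTop 1).mono fun y hy => (fratio_eq hθ hy).symm)

end

/-- `f` is differentiable with negative derivative on `(1, ∞)` (hence strictly
decreasing there), tends to `+∞` as `x → 1⁺`, and tends to `1` as `x → +∞`. -/
theorem stmt1 (θ : ℝ) (hθ : 0 < θ) :
    (∃ f' : ℝ → ℝ, ∀ x, 1 < x → HasDerivAt (fratio θ) (f' x) x ∧ f' x < 0) ∧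
    StrictAntiOn (fratio θ) (Set.Ioi 1) ∧
    Filter.Tendsto (fratio θ) (nhdsWithin 1 (Set.Ioi 1)) Filter.atTop ∧
    Filter.Tendsto (fratio θ) Filter.atTop (nhds 1) := by
  have hderiv : ∀ x, 1 < x →
      HasDerivAt (fratio θ) (deriv (fratio θ) x) x ∧ deriv (fratio θ) x < 0 :=
    fun x hx => ⟨(hasDerivAt_fratio hθ hx).differentiableAt.hasDerivAt, deriv_fratio_neg hθ hx⟩
  refine ⟨⟨_, hderiv⟩, ?_, tendsto_fratio_nhdsGT_one hθ, tendsto_fratio_atTop hθ⟩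
  refine strictAntiOn_of_deriv_neg (convex_Ioi 1)
    (fun x hx => (hderiv x hx).1.continuousAt.continuousWithinAt) ?_
  rw [interior_Ioi]
  exact fun x hx => (hderiv x hx).2
end

section
/- Let δ ∈ (0, (b−a)/4) and ε > 0. There exists n₀ ∈ ℕ such that for all n ≥ n₀ the following holds: for any points a ≤ ξ₁ ≤ … ≤ ξ_n ≤ b, if sup_{a+δ ≤ x ≤ b−δ} |N_n(x) − μ_n(x)| ≤ 2π·√(1+ε)·σ_n², then for every integer k with μ_n(a+2δ) < k < μ_n(b−2δ) one has |μ_n(ξ_k) − k| ≤ 2π·√(1+ε)·σ_n² + 1. -/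
open MeasureTheory Set

lemma aux_log_le (K c' : ℝ) (hK : 0 < K) (hc : 0 < c') (n : ℕ)
    (hn : ⌈(2 * K / c') ^ 2⌉₊ + 1 ≤ n) : K * Real.log n ≤ c' * n := by
  have hn1 : (1:ℕ) ≤ n := le_trans (Nat.le_add_left 1 _) hn
  have hnR : ((2 * K / c') ^ 2 : ℝ) < n := by
    have h1 : ((2 * K / c') ^ 2 : ℝ) ≤ (⌈(2 * K / c') ^ 2⌉₊ : ℝ) := Nat.le_ceil _
    have h2 : ((⌈(2 * K / c') ^ 2⌉₊ : ℕ) : ℝ) < n := by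
      exact_mod_cast Nat.lt_of_lt_of_le (Nat.lt_succ_self _) hn
    linarith
  have hn0 : (0:ℝ) < n := by exact_mod_cast hn1
  have hs : 2 * K / c' ≤ Real.sqrt n := by
    rw [Real.le_sqrt (by positivity) (le_of_lt hn0)]
    exact hnR.le
  have hsq : Real.sqrt n ^ 2 = (n:ℝ) := Real.sq_sqrt hn0.le
  have hs0 : 0 < Real.sqrt n := Real.sqrt_pos.mpr hn0
  have hlog : Real.log n ≤ 2 * Real.sqrt n := by
    have := Real.log_le_sub_one_of_pos hs0
    have h2 : Real.log (Real.sqrt n) = Real.log n / 2 := Real.log_sqrt hn0.le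
    linarith
  have h2K : 2 * K ≤ c' * Real.sqrt n := by
    rw [div_le_iff₀ hc] at hs; linarith [hs]
  calc K * Real.log n ≤ K * (2 * Real.sqrt n) := mul_le_mul_of_nonneg_left hlog hK.le
    _ = (2 * K) * Real.sqrt n := by ring
    _ ≤ (c' * Real.sqrt n) * Real.sqrt n := mul_le_mul_of_nonneg_right h2K hs0.le
    _ = c' * n := by rw [mul_assoc, ← sq, hsq]

/-- Deterministic rigidity lemma: if the counting function of ordered points
`a ≤ ξ₁ ≤ … ≤ ξ_n ≤ b` deviates from `μ_n(x) = n∫_a^x ρ` by at most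
`2π√(1+ε)·σ_n²` on `[a+δ, b−δ]` (where `σ_n² = log n/(2π²)`), then for every
index `k` with `μ_n(a+2δ) < k < μ_n(b−2δ)` one has
`|μ_n(ξ_k) − k| ≤ 2π√(1+ε)·σ_n² + 1`. Here the `k`-th point (for `1 ≤ k ≤ n`)
is `ξ ⟨k−1⟩`, i.e. the point of index `i : Fin n` corresponds to `k = i + 1`. -/
theorem stmt18 (a b : ℝ) (ha : 0 < a) (hab : a < b)
    (ρ : ℝ → ℝ) (hρcont : ContinuousOn ρ (Set.Ioo a b))
    (hρpos : ∀ x ∈ Set.Ioo a b, 0 < ρ x)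
    (hρ1 : ∫ x in a..b, ρ x = 1)
    (δ ε : ℝ) (hδ : 0 < δ) (hδ' : δ < (b - a) / 4) (hε : 0 < ε) :
    ∃ n0 : ℕ, ∀ n : ℕ, n0 ≤ n →
      ∀ ξ : Fin n → ℝ, Monotone ξ → (∀ i, ξ i ∈ Set.Icc a b) →
      (∀ y ∈ Set.Icc (a + δ) (b - δ),
        |((Finset.univ.filter fun i => ξ i ≤ y).card : ℝ) - n * ∫ u in a..y, ρ u| ≤
          2 * Real.pi * Real.sqrt (1 + ε) * (Real.log n / (2 * Real.pi ^ 2))) →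
      ∀ i : Fin n,
        (n : ℝ) * (∫ u in a..(a + 2 * δ), ρ u) < (i : ℕ) + 1 →
        ((i : ℕ) + 1 : ℝ) < n * ∫ u in a..(b - 2 * δ), ρ u →
        |(n : ℝ) * (∫ u in a..(ξ i), ρ u) - ((i : ℕ) + 1)| ≤
          2 * Real.pi * Real.sqrt (1 + ε) * (Real.log n / (2 * Real.pi ^ 2)) + 1 := by
  have hπ : (0:ℝ) < Real.pi := Real.pi_pos
  set K : ℝ := 2 * Real.pi * Real.sqrt (1 + ε) / (2 * Real.pi ^ 2) with hKdef
  have hK0 : 0 < K := by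
    have h1 : 0 < Real.sqrt (1 + ε) := Real.sqrt_pos.mpr (by linarith)
    positivity
  -- interval geometry
  have hg1 : a < a + δ := by linarith
  have hg2 : a + δ < a + 2 * δ := by linarith
  have hg3 : a + 2 * δ < b - 2 * δ := by linarith
  have hg4 : b - 2 * δ < b - δ := by linarith
  have hg5 : b - δ < b := by linarith
  -- integrability
  have hInt : IntegrableOn ρ (Set.Ioc a b) := by
    by_contra h
    rw [intervalIntegral.integral_of_le hab.le, MeasureTheory.integral_undef h] at hρ1
    exact one_ne_zero hρ1.symm
  have hII : ∀ x y, a ≤ x → x ≤ y → y ≤ b → IntervalIntegrable ρ volume x y := by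
    intro x y hx hxy hy
    rw [intervalIntegrable_iff_integrableOn_Ioc_of_le hxy]
    exact hInt.mono_set (Set.Ioc_subset_Ioc hx hy)
  -- continuity of the primitive
  have hFcont : ContinuousOn (fun x => ∫ u in a..x, ρ u) (Set.Icc a b) := by
    have := intervalIntegral.continuousOn_primitive_interval'
      (hII a b le_rfl hab.le le_rfl) Set.left_mem_uIcc
    rwa [Set.uIcc_of_le hab.le] at this
  -- additivity
  have hFadd : ∀ x y, a ≤ x → x ≤ y → y ≤ b →
      (∫ u in a..y, ρ u) = (∫ u in a..x, ρ u) + ∫ u in x..y, ρ u :=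
    fun x y hx hxy hy => (intervalIntegral.integral_add_adjacent_intervals
      (hII a x le_rfl hx (hxy.trans hy)) (hII x y hx hxy hy)).symm
  -- a.e. nonnegativity and monotonicity
  have hnull : volume ({a, b} : Set ℝ) = 0 :=
    ((Set.finite_singleton b).insert a).measure_zero volume
  have hae : ∀ᵐ u, u ∉ ({a, b} : Set ℝ) := measure_eq_zero_iff_ae_notMem.mp hnull
  have hFnn : ∀ x y, a ≤ x → x ≤ y → y ≤ b → 0 ≤ ∫ u in x..y, ρ u := by
    intro x y hx hxy hy
    refine intervalIntegral.integral_nonneg_of_ae_restrict hxy ?_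
    rw [Filter.EventuallyLE, ae_restrict_iff' measurableSet_Icc]
    filter_upwards [hae] with u hu hmem
    have hna : u ≠ a ∧ u ≠ b := by simpa [not_or] using hu
    exact (hρpos u ⟨(hx.trans hmem.1).lt_of_ne (Ne.symm hna.1),
      (hmem.2.trans hy).lt_of_ne hna.2⟩).le
  -- positivity of the two bulk integrals
  set c : ℝ := ∫ u in (a + δ)..(a + 2 * δ), ρ u with hcdef
  set d : ℝ := ∫ u in (b - 2 * δ)..(b - δ), ρ u with hddef
  have hc0 : 0 < c := by
    refine intervalIntegral.intervalIntegral_pos_of_pos_on (hII _ _ (by linarith) (by linarith) (by linarith))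
      (fun x hx => hρpos x ⟨by linarith [hx.1], by linarith [hx.2]⟩) (by linarith)
  have hd0 : 0 < d := by
    refine intervalIntegral.intervalIntegral_pos_of_pos_on (hII _ _ (by linarith) (by linarith) (by linarith))
      (fun x hx => hρpos x ⟨by linarith [hx.1], by linarith [hx.2]⟩) (by linarith)
  refine ⟨max (⌈(2 * K / c) ^ 2⌉₊ + 1) (⌈(2 * K / d) ^ 2⌉₊ + 1), ?_⟩
  intro n hn ξ hmono hmem hdev i hk1 hk2
  have hCc : K * Real.log n ≤ c * n :=
    aux_log_le K c hK0 hc0 n (le_trans (le_max_left _ _) hn)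
  have hCd : K * Real.log n ≤ d * n :=
    aux_log_le K d hK0 hd0 n (le_trans (le_max_right _ _) hn)
  have hCK : 2 * Real.pi * Real.sqrt (1 + ε) * (Real.log n / (2 * Real.pi ^ 2))
      = K * Real.log n := by rw [hKdef]; ring
  rw [hCK] at hdev ⊢
  -- counting lemmas
  have hNge : ∀ y, ξ i ≤ y →
      ((i : ℕ) + 1 : ℝ) ≤ ((Finset.univ.filter fun j => ξ j ≤ y).card : ℝ) := by
    intro y hy
    have hsub : Finset.Iic i ⊆ Finset.univ.filter fun j => ξ j ≤ y := by
      intro j hj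
      simp only [Finset.mem_filter, Finset.mem_univ, true_and]
      exact le_trans (hmono (Finset.mem_Iic.mp hj)) hy
    have := Finset.card_le_card hsub
    rw [Fin.card_Iic] at this
    exact_mod_cast this
  have hNle : ∀ y, y < ξ i →
      (((Finset.univ.filter fun j => ξ j ≤ y).card : ℝ)) ≤ (i : ℕ) := by
    intro y hy
    have hsub : (Finset.univ.filter fun j => ξ j ≤ y) ⊆ Finset.Iio i := by
      intro j hj
      simp only [Finset.mem_filter, Finset.mem_univ, true_and] at hj
      rw [Finset.mem_Iio]
      by_contra h
      exact absurd (le_trans (hmono (le_of_not_gt h)) hj) (not_le.mpr hy)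
    have := Finset.card_le_card hsub
    rw [Fin.card_Iio] at this
    exact_mod_cast this
  -- Step 1 : a + δ < ξ i
  have hstep1 : a + δ < ξ i := by
    by_contra h
    push_neg at h
    have h1 := hNge (a + δ) h
    have h2 := abs_le.mp (hdev (a + δ) ⟨le_refl _, by linarith⟩)
    have h3 := hFadd (a + δ) (a + 2 * δ) (by linarith) (by linarith) (by linarith)
    have h3' : (n:ℝ) * ∫ u in a..(a + 2 * δ), ρ u
        = n * (∫ u in a..(a + δ), ρ u) + n * c := by rw [h3]; ring
    linarith [h2.2, hCc]
  -- Step 2 : ξ i ≤ b - δ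
  have hstep2 : ξ i ≤ b - δ := by
    by_contra h
    push_neg at h
    have h1 := hNle (b - δ) h
    have h2 := abs_le.mp (hdev (b - δ) ⟨by linarith, le_refl _⟩)
    have h3 := hFadd (b - 2 * δ) (b - δ) (by linarith) (by linarith) (by linarith)
    have h3' : (n:ℝ) * ∫ u in a..(b - δ), ρ u
        = n * (∫ u in a..(b - 2 * δ), ρ u) + n * d := by rw [h3]; ring
    linarith [h2.1, hCd, hk2]
  have hdevξ := abs_le.mp (hdev (ξ i) ⟨hstep1.le, hstep2⟩)
  have hNξ := hNge (ξ i) le_rfl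
  have hlow : ((i:ℕ) + 1 : ℝ) - K * Real.log n ≤ (n:ℝ) * ∫ u in a..(ξ i), ρ u := by
    linarith [hdevξ.2]
  have hξa : a < ξ i := lt_trans hg1 hstep1
  have hξb : ξ i < b := lt_of_le_of_lt hstep2 hg5
  have hcontat : ContinuousAt (fun x => (n:ℝ) * ∫ u in a..x, ρ u) (ξ i) :=
    continuousAt_const.mul (hFcont.continuousAt (Icc_mem_nhds hξa hξb))
  have htend : Filter.Tendsto (fun x => (n:ℝ) * ∫ u in a..x, ρ u)
      (nhdsWithin (ξ i) (Set.Iio (ξ i))) (nhds ((n:ℝ) * ∫ u in a..(ξ i), ρ u)) :=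
    hcontat.continuousWithinAt
  have hev : ∀ᶠ x in nhdsWithin (ξ i) (Set.Iio (ξ i)),
      (n:ℝ) * (∫ u in a..x, ρ u) ≤ (i:ℕ) + K * Real.log n := by
    filter_upwards [Ioo_mem_nhdsLT_of_mem ⟨hstep1, le_rfl⟩] with x hx
    have h2 := abs_le.mp (hdev x ⟨hx.1.le, le_trans hx.2.le hstep2⟩)
    have h1 := hNle x hx.2
    linarith [h2.1]
  have hup : (n:ℝ) * (∫ u in a..(ξ i), ρ u) ≤ (i:ℕ) + K * Real.log n :=
    le_of_tendsto htend hev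
  rw [abs_le]
  constructor <;> linarith
end

section
/- For θ = 1 and 0 < a < b, the pair c0 = ((√b + √a)/2)², c1 = ((√b − √a)/2)² satisfies c0 > c1 > 0, J(s_a; c0, c1) = a and J(s_b; c0, c1) = b; it is therefore the unique such pair. Moreover in this case s_b = −s_a = (√b + √a)/(√b − √a). -/

lemma jkey (c0 c1 : ℝ) (h1 : 0 < c1) (h01 : c1 < c0) :
    sB 1 (c0/c1) = Real.sqrt c0 / Real.sqrt c1 ∧
    sA 1 (c0/c1) = -(Real.sqrt c0 / Real.sqrt c1) ∧
    Jmap 1 c0 c1 (sB 1 (c0/c1)) = (Real.sqrt c0 + Real.sqrt c1)^2 ∧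
    Jmap 1 c0 c1 (sA 1 (c0/c1)) = (Real.sqrt c0 - Real.sqrt c1)^2 := by
  have h0 : 0 < c0 := h1.trans h01
  set u := Real.sqrt c0 with hudef
  set v := Real.sqrt c1 with hvdef
  have hv : 0 < v := Real.sqrt_pos.2 h1
  have hu : 0 < u := Real.sqrt_pos.2 h0
  have hsr : Real.sqrt (c0/c1) = u / v := by
    rw [hudef, hvdef, Real.sqrt_div h0.le]
  have hB : sB 1 (c0/c1) = u / v := by
    rw [sB, show (4:ℝ)*1*(c0/c1) + (1-1)^2 = 2^2*(c0/c1) by ring,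
        Real.sqrt_mul (by positivity), Real.sqrt_sq (by norm_num : (0:ℝ) ≤ 2), hsr]
    ring
  have hA : sA 1 (c0/c1) = -(u / v) := by
    rw [sA, show (4:ℝ)*1*(c0/c1) + (1-1)^2 = 2^2*(c0/c1) by ring,
        Real.sqrt_mul (by positivity), Real.sqrt_sq (by norm_num : (0:ℝ) ≤ 2), hsr]
    ring
  have hc0 : u ^ 2 = c0 := Real.sq_sqrt h0.le
  have hc1 : v ^ 2 = c1 := Real.sq_sqrt h1.le
  refine ⟨hB, hA, ?_, ?_⟩
  · rw [hB, Jmap, one_div_one, Real.rpow_one, ← hc0, ← hc1]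
    field_simp
    ring
  · rw [hA, Jmap, one_div_one, Real.rpow_one, ← hc0, ← hc1]
    have hne : u - v ≠ 0 := by
      have : v < u := by
        rw [hudef, hvdef]; exact Real.sqrt_lt_sqrt h1.le h01
      linarith
    field_simp
    ring
/-- For `θ = 1` and `0 < a < b`: the pair `c0 = ((√b + √a)/2)²`,
`c1 = ((√b − √a)/2)²` satisfies `c0 > c1 > 0`, `J(s_a; c0, c1) = a` and
`J(s_b; c0, c1) = b`; it is the unique such pair; and
`s_b = −s_a = (√b + √a)/(√b − √a)`. -/
theorem stmt19 (a b : ℝ) (ha : 0 < a) (hab : a < b) :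
    let c0 := ((Real.sqrt b + Real.sqrt a) / 2) ^ 2
    let c1 := ((Real.sqrt b - Real.sqrt a) / 2) ^ 2
    (0 < c1 ∧ c1 < c0) ∧
    Jmap 1 c0 c1 (sA 1 (c0 / c1)) = a ∧
    Jmap 1 c0 c1 (sB 1 (c0 / c1)) = b ∧
    (∀ c0' c1' : ℝ, 0 < c1' → c1' < c0' →
      Jmap 1 c0' c1' (sA 1 (c0' / c1')) = a →
      Jmap 1 c0' c1' (sB 1 (c0' / c1')) = b →
      c0' = c0 ∧ c1' = c1) ∧
    sB 1 (c0 / c1) = (Real.sqrt b + Real.sqrt a) / (Real.sqrt b - Real.sqrt a) ∧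
    sA 1 (c0 / c1) = -((Real.sqrt b + Real.sqrt a) / (Real.sqrt b - Real.sqrt a)) := by
  intro c0 c1
  have hc0def : c0 = ((Real.sqrt b + Real.sqrt a) / 2) ^ 2 := rfl
  have hc1def : c1 = ((Real.sqrt b - Real.sqrt a) / 2) ^ 2 := rfl
  have hb : 0 < b := ha.trans hab
  have hsa : 0 < Real.sqrt a := Real.sqrt_pos.2 ha
  have hsb : 0 < Real.sqrt b := Real.sqrt_pos.2 hb
  have hlt : Real.sqrt a < Real.sqrt b := Real.sqrt_lt_sqrt ha.le hab
  have hsc0 : Real.sqrt c0 = (Real.sqrt b + Real.sqrt a) / 2 := by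
    rw [hc0def, Real.sqrt_sq (by positivity)]
  have hsc1 : Real.sqrt c1 = (Real.sqrt b - Real.sqrt a) / 2 := by
    rw [hc1def, Real.sqrt_sq (by linarith)]
  have h1 : 0 < c1 := by
    rw [hc1def]; exact pow_pos (by linarith) 2
  have h01 : c1 < c0 := by
    rw [hc0def, hc1def]
    nlinarith [mul_pos hsa hsb]
  obtain ⟨hB, hA, hJB, hJA⟩ := jkey c0 c1 h1 h01
  have hratio : Real.sqrt c0 / Real.sqrt c1
      = (Real.sqrt b + Real.sqrt a) / (Real.sqrt b - Real.sqrt a) := by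
    rw [hsc0, hsc1]
    have hne : Real.sqrt b - Real.sqrt a ≠ 0 := by linarith
    field_simp
  refine ⟨⟨h1, h01⟩, ?_, ?_, ?_, by rw [hB, hratio], by rw [hA, hratio]⟩
  · rw [hJA, hsc0, hsc1,
      show (Real.sqrt b + Real.sqrt a) / 2 - (Real.sqrt b - Real.sqrt a) / 2
        = Real.sqrt a by ring, Real.sq_sqrt ha.le]
  · rw [hJB, hsc0, hsc1,
      show (Real.sqrt b + Real.sqrt a) / 2 + (Real.sqrt b - Real.sqrt a) / 2
        = Real.sqrt b by ring, Real.sq_sqrt hb.le]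
  · intro c0' c1' h1' h01' hJa' hJb'
    obtain ⟨_, _, hJB', hJA'⟩ := jkey c0' c1' h1' h01'
    have h0' : 0 < c0' := h1'.trans h01'
    have hle' : Real.sqrt c1' ≤ Real.sqrt c0' := Real.sqrt_le_sqrt h01'.le
    have ea : (Real.sqrt c0' - Real.sqrt c1') ^ 2 = a := by rw [← hJA', hJa']
    have eb : (Real.sqrt c0' + Real.sqrt c1') ^ 2 = b := by rw [← hJB', hJb']
    have hsa' : Real.sqrt a = Real.sqrt c0' - Real.sqrt c1' := by
      rw [← ea, Real.sqrt_sq (by linarith)]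
    have hsb' : Real.sqrt b = Real.sqrt c0' + Real.sqrt c1' := by
      have : 0 ≤ Real.sqrt c0' + Real.sqrt c1' := by positivity
      rw [← eb, Real.sqrt_sq this]
    constructor
    · rw [hc0def, show (Real.sqrt b + Real.sqrt a) / 2 = Real.sqrt c0' by
        rw [hsa', hsb']; ring, Real.sq_sqrt h0'.le]
    · rw [hc1def, show (Real.sqrt b - Real.sqrt a) / 2 = Real.sqrt c1' by
        rw [hsa', hsb']; ring, Real.sq_sqrt h1'.le]
end
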